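/- Let μ be a compactly supported probability measure on a domain Ω ⊂ ℝ^d, absolutely continuous with respect to Lebesgue measure. Let (Ω', F, P) be a probability space and let T_1, T_2, … be i.i.d. random maps Ω → Ω that are uniformly bounded, such that almost surely the family of realizations together with the identity forms an admissible family of deformations on Ω, and whose pointwise expectation satisfies E[T(x)] = x for all x ∈ Ω. For J ≥ 1 let μ_B^J = ( (1/J) Σ_{j=1}^J T_j )_# μ (the Wasserstein barycenter with equal weights of the warped measures (T_j)_#μ). Then almost surely W2²(μ_B^J, μ) → 0 as J → ∞. -/

import Mathlib

/-!
Fix a realization of the maps. Each `T j` is the gradient of a convex function on `Ω`, so the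
averages `S_J = J⁻¹ ∑_{j<J} T j` are uniformly bounded monotone operators,
`0 ≤ ⟪S_J x - S_J y, x - y⟫`. By the strong law of large numbers, almost surely `S_J x → x`
simultaneously for all `x` in a countable dense subset of `interior Ω`. Monotonicity then forces
every cluster point `p` of `S_J x` to satisfy `0 ≤ ⟪z - p, z - x⟫` for all `z` near `x`, hence
`p = x`: so `S_J → id` on `interior Ω`, which carries all of `μ` because the frontier of a convex
set is Lebesgue-null. Coupling `(S_J)_# μ` with `μ` through `x ↦ (S_J x, x)` and dominated
convergence give `W₂² → 0`.
-/

open MeasureTheory ENNReal NNReal Filter Topology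

noncomputable section

/-- A coupling of `μ` and `ν`: a measure on the product whose marginals are `μ` and `ν`. -/
def IsCoupling {E : Type*} [MeasurableSpace E] (π : Measure (E × E)) (μ ν : Measure E) : Prop :=
  π.map Prod.fst = μ ∧ π.map Prod.snd = ν

/-- Squared 2-Wasserstein distance: infimum over couplings of `∫ |x - y|² dπ`. -/
def W2sq {E : Type*} [NormedAddCommGroup E] [MeasurableSpace E] (μ ν : Measure E) : ℝ≥0∞ :=
  ⨅ (π : Measure (E × E)) (_ : IsCoupling π μ ν), ∫⁻ p, (‖p.1 - p.2‖₊ : ℝ≥0∞) ^ 2 ∂π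

/-- The 2-Wasserstein distance. -/
def W2 {E : Type*} [NormedAddCommGroup E] [MeasurableSpace E] (μ ν : Measure E) : ℝ≥0∞ :=
  W2sq μ ν ^ (1/2 : ℝ)

/-- A measure has a finite second moment. -/
def FiniteSecondMoment {E : Type*} [NormedAddCommGroup E] [MeasurableSpace E]
    (μ : Measure E) : Prop :=
  ∫⁻ x, (‖x‖₊ : ℝ≥0∞) ^ 2 ∂μ < ∞

/-- An admissible family of deformations of a domain `Ω ⊆ ℝ^d`: it contains the identity,
every map is a bijection of `Ω` onto itself, and every composition `T i ∘ (T j)⁻¹` is the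
gradient of a (proper) lower semicontinuous convex function on `Ω` (expressed by: there is a
convex l.s.c. `φ` whose gradient at the point `T j y` is `T i y`, for every `y ∈ Ω`). -/
def AdmissibleFamily {d : ℕ} (Ω : Set (EuclideanSpace ℝ (Fin d))) {ι : Type*}
    (T : ι → EuclideanSpace ℝ (Fin d) → EuclideanSpace ℝ (Fin d)) : Prop :=
  (∃ i₀, ∀ x ∈ Ω, T i₀ x = x) ∧
  (∀ i, Set.BijOn (T i) Ω Ω) ∧
  (∀ i j, ∃ φ : EuclideanSpace ℝ (Fin d) → ℝ,
    ConvexOn ℝ Ω φ ∧ LowerSemicontinuousOn φ Ω ∧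
    ∀ y ∈ Ω, HasGradientAt φ (T i y) (T j y))

open scoped RealInnerProductSpace

section MonotoneOperator

variable {F : Type*} [NormedAddCommGroup F] [InnerProductSpace ℝ F]

def MonotoneOperatorOn (f : F → F) (s : Set F) : Prop :=
  ∀ x ∈ s, ∀ y ∈ s, 0 ≤ ⟪f x - f y, x - y⟫

lemma MonotoneOperatorOn.mono {f : F → F} {s t : Set F} (hf : MonotoneOperatorOn f s)
    (hts : t ⊆ s) : MonotoneOperatorOn f t :=
  fun x hx y hy => hf x (hts hx) y (hts hy)

lemma MonotoneOperatorOn.sum {ι : Type*} (I : Finset ι) {f : ι → F → F} {s : Set F}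
    (hf : ∀ i ∈ I, MonotoneOperatorOn (f i) s) :
    MonotoneOperatorOn (fun x => ∑ i ∈ I, f i x) s := fun x hx y hy => by
  rw [← Finset.sum_sub_distrib, sum_inner]
  exact Finset.sum_nonneg fun i hi => hf i hi x hx y hy

lemma MonotoneOperatorOn.const_smul {f : F → F} {s : Set F} (hf : MonotoneOperatorOn f s)
    {c : ℝ} (hc : 0 ≤ c) : MonotoneOperatorOn (fun x => c • f x) s := fun x hx y hy => by
  rw [← smul_sub, real_inner_smul_left]
  exact mul_nonneg hc (hf x hx y hy)

lemma ConvexOn.inner_le_sub_of_hasGradientAt [CompleteSpace F] {s : Set F} {φ : F → ℝ}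
    (hφ : ConvexOn ℝ s φ) {x y g : F} (hx : x ∈ s) (hy : y ∈ s) (hg : HasGradientAt φ g x) :
    ⟪g, y - x⟫ ≤ φ y - φ x := by
  have hslope := hg.hasFDerivAt.lim_real (y - x)
  rw [InnerProductSpace.toDual_apply_apply] at hslope
  refine le_of_tendsto hslope ?_
  filter_upwards [eventually_ge_atTop (1 : ℝ)] with c hc
  have hc0 : 0 < c := zero_lt_one.trans_le hc
  have hchord := hφ.2 hx hy (sub_nonneg.2 (inv_le_one_of_one_le₀ hc)) (inv_nonneg.2 hc0.le)
    (sub_add_cancel 1 c⁻¹)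
  rw [show (1 - c⁻¹) • x + c⁻¹ • y = x + c⁻¹ • (y - x) by module, smul_eq_mul,
    smul_eq_mul] at hchord
  calc c • (φ (x + c⁻¹ • (y - x)) - φ x) ≤ c * (c⁻¹ * (φ y - φ x)) := by
        rw [smul_eq_mul]; gcongr; linarith
    _ = φ y - φ x := by field_simp

lemma ConvexOn.monotoneOperatorOn_of_hasGradientAt [CompleteSpace F] {s : Set F} {φ : F → ℝ}
    (hφ : ConvexOn ℝ s φ) {g : F → F} (hg : ∀ x ∈ s, HasGradientAt φ (g x) x) :
    MonotoneOperatorOn g s := fun x hx y hy => by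
  have hxy := hφ.inner_le_sub_of_hasGradientAt hx hy (hg x hx)
  have hyx := hφ.inner_le_sub_of_hasGradientAt hy hx (hg y hy)
  have hflip : ⟪g x, x - y⟫ = -⟪g x, y - x⟫ := by rw [← inner_neg_right, neg_sub]
  rw [inner_sub_left, hflip]
  linarith

lemma eq_of_forall_inner_sub_nonneg {U : Set F} {x p : F} (hU : U ∈ 𝓝 x)
    (h : ∀ z ∈ U, 0 ≤ ⟪z - p, z - x⟫) : p = x := by
  set w := p - x
  have hpath : Tendsto (fun t : ℝ => x + t • w) (𝓝[>] 0) (𝓝 x) := by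
    have : Continuous fun t : ℝ => x + t • w := by fun_prop
    simpa using (this.tendsto 0).mono_left nhdsWithin_le_nhds
  obtain ⟨t, htU, ht0, ht1⟩ :=
    ((hpath.eventually hU).and (Ioo_mem_nhdsGT zero_lt_one)).exists
  -- at `z = x + t • (p - x)` the inner product is `(t - 1) t ‖p - x‖²`
  have hz := h _ htU
  rw [show x + t • w - p = (t - 1) • w by module, add_sub_cancel_left, real_inner_smul_left,
    real_inner_smul_right, real_inner_self_eq_norm_sq] at hz
  have hw : ‖w‖ ^ 2 ≤ 0 := by nlinarith [mul_pos (sub_pos.2 ht1) ht0]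
  simpa [w, sub_eq_zero] using hw

lemma tendsto_of_monotoneOperatorOn_of_dense [ProperSpace F] {U D : Set F} (hU : IsOpen U)
    (hDU : D ⊆ U) (hUD : U ⊆ closure D) {f : ℕ → F → F}
    (hf : ∀ n, MonotoneOperatorOn (f n) U)
    (hD : ∀ y ∈ D, Tendsto (fun n => f n y) atTop (𝓝 y))
    {x : F} (hx : x ∈ U) {C : ℝ} (hC : ∀ n, ‖f n x‖ ≤ C) :
    Tendsto (fun n => f n x) atTop (𝓝 x) := by
  refine tendsto_of_subseq_tendsto fun ns hns => ?_
  obtain ⟨p, -, ms, hms, hp⟩ := tendsto_subseq_of_bounded (Metric.isBounded_closedBall (x := 0))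
    fun n => mem_closedBall_zero_iff.2 (hC (ns n))
  refine ⟨ms, ?_⟩
  suffices hpx : p = x from hpx ▸ hp
  have hclosed : IsClosed {z : F | 0 ≤ ⟪z - p, z - x⟫} :=
    isClosed_le continuous_const (by fun_prop)
  -- monotonicity gives `0 ≤ ⟪y - p, y - x⟫` for `y ∈ D` in the limit, hence on `closure D ⊇ U`
  refine eq_of_forall_inner_sub_nonneg (hU.mem_nhds hx) fun z hz => ?_
  refine hclosed.closure_subset_iff.2 (fun y hy => ?_) (hUD hz)
  have hlim : Tendsto (fun n => ⟪f (ns (ms n)) y - f (ns (ms n)) x, y - x⟫) atTop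
      (𝓝 ⟪y - p, y - x⟫) :=
    (((hD y hy).comp (hns.comp hms.tendsto_atTop)).sub hp).inner tendsto_const_nhds
  exact ge_of_tendsto' hlim fun n => hf _ y (hDU hy) x hx

end MonotoneOperator

lemma norm_average_le {E : Type*} [SeminormedAddCommGroup E] [NormedSpace ℝ E] {f : ℕ → E}
    {C : ℝ} (hC : 0 ≤ C) (hf : ∀ j, ‖f j‖ ≤ C) (J : ℕ) :
    ‖(J : ℝ)⁻¹ • ∑ j ∈ Finset.range J, f j‖ ≤ C := by
  rcases J.eq_zero_or_pos with rfl | hJ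
  · simpa using hC
  calc ‖(J : ℝ)⁻¹ • ∑ j ∈ Finset.range J, f j‖ ≤ (J : ℝ)⁻¹ * (J * C) := by
        rw [norm_smul, Real.norm_of_nonneg (by positivity)]
        gcongr
        simpa using norm_sum_le_of_le (Finset.range J) fun j _ => hf j
    _ = C := by field_simp

lemma aemeasurable_of_hasGradientAt {F : Type*} [NormedAddCommGroup F] [InnerProductSpace ℝ F]
    [FiniteDimensional ℝ F] [MeasurableSpace F] [BorelSpace F] {s : Set F} {φ : F → ℝ}
    {g : F → F} (hg : ∀ x ∈ s, HasGradientAt φ (g x) x) {μ : Measure F}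
    (hμ : ∀ᵐ x ∂μ, x ∈ s) : AEMeasurable g μ := by
  -- `fderiv ℝ φ` is measurable for every `φ`, with no regularity assumption on `φ`
  have hmeas : Measurable (gradient φ) :=
    (InnerProductSpace.toDual ℝ F).symm.continuous.measurable.comp (measurable_fderiv ℝ φ)
  exact hmeas.aemeasurable.congr (by filter_upwards [hμ] with x hx using (hg x hx).gradient)

lemma Convex.ae_mem_interior {E : Type*} [NormedAddCommGroup E] [NormedSpace ℝ E]
    [MeasurableSpace E] [BorelSpace E] [FiniteDimensional ℝ E] {s : Set E} (hs : Convex ℝ s)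
    {μ ν : Measure E} [ν.IsAddHaarMeasure] (hμν : μ ≪ ν) (hμs : ∀ᵐ x ∂μ, x ∈ s) :
    ∀ᵐ x ∂μ, x ∈ interior s := by
  have hfrontier : ∀ᵐ x ∂μ, x ∉ frontier s :=
    measure_eq_zero_iff_ae_notMem.1 (hμν (hs.addHaar_frontier ν))
  filter_upwards [hμs, hfrontier] with x hxs hxf
  rw [← self_sdiff_frontier]
  exact ⟨hxs, hxf⟩

section Wasserstein

variable {E : Type*} [NormedAddCommGroup E] [MeasurableSpace E]

lemma W2sq_map_le_lintegral {μ : Measure E} {f : E → E} (hf : AEMeasurable f μ) :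
    W2sq (μ.map f) μ ≤ ∫⁻ x, ‖f x - x‖ₑ ^ 2 ∂μ := by
  have hpair : AEMeasurable (fun x => (f x, x)) μ := hf.prodMk aemeasurable_id
  have hcoupling : IsCoupling (μ.map fun x => (f x, x)) (μ.map f) μ := by
    constructor
    · rw [AEMeasurable.map_map_of_aemeasurable measurable_fst.aemeasurable hpair]
      rfl
    · rw [AEMeasurable.map_map_of_aemeasurable measurable_snd.aemeasurable hpair]
      exact Measure.map_id
  calc W2sq (μ.map f) μ ≤ ∫⁻ p, ‖p.1 - p.2‖ₑ ^ 2 ∂(μ.map fun x => (f x, x)) :=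
        iInf₂_le (μ.map fun x => (f x, x)) hcoupling
    _ ≤ ∫⁻ x, ‖f x - x‖ₑ ^ 2 ∂μ := lintegral_map_le _ _

lemma tendsto_W2sq_map_of_ae_tendsto [BorelSpace E] [SecondCountableTopology E]
    {μ : Measure E} [IsFiniteMeasure μ] {S : ℕ → E → E} {B : ℝ}
    (hS : ∀ n, AEMeasurable (S n) μ) (hB : ∀ n, ∀ᵐ x ∂μ, ‖S n x - x‖ ≤ B)
    (hlim : ∀ᵐ x ∂μ, Tendsto (fun n => S n x) atTop (𝓝 x)) :
    Tendsto (fun n => W2sq (μ.map (S n)) μ) atTop (𝓝 0) := by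
  have hcost : Tendsto (fun n => ∫⁻ x, ‖S n x - x‖ₑ ^ 2 ∂μ) atTop
      (𝓝 (∫⁻ _, 0 ∂μ)) := by
    refine tendsto_lintegral_of_dominated_convergence' (fun _ => ENNReal.ofReal B ^ 2)
      (fun n => ((hS n).sub aemeasurable_id).enorm.pow_const 2) (fun n => ?_) ?_ ?_
    · filter_upwards [hB n] with x hx
      gcongr
      simpa [ofReal_norm] using ENNReal.ofReal_le_ofReal hx
    · rw [lintegral_const]
      exact ENNReal.mul_ne_top (by simp) (measure_ne_top μ _)
    · filter_upwards [hlim] with x hx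
      simpa using ENNReal.Tendsto.pow (tendsto_sub_nhds_zero_iff.2 hx).enorm (n := 2)
  rw [lintegral_zero] at hcost
  exact tendsto_of_tendsto_of_tendsto_of_le_of_le tendsto_const_nhds hcost (fun _ => bot_le)
    fun n => W2sq_map_le_lintegral (hS n)

end Wasserstein

lemma ae_tendsto_average_apply {Ω' α E : Type*} [MeasurableSpace Ω'] {P : Measure Ω'}
    [IsProbabilityMeasure P] [NormedAddCommGroup E] [NormedSpace ℝ E] [CompleteSpace E]
    [MeasurableSpace E] [BorelSpace E] {T : ℕ → Ω' → α → E}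
    (hindep : ProbabilityTheory.iIndepFun T P)
    (hident : ∀ j, ProbabilityTheory.IdentDistrib (T j) (T 0) P P) (x : α)
    (hint : Integrable (fun ω => T 0 ω x) P) :
    ∀ᵐ ω ∂P, Tendsto (fun J : ℕ => (J : ℝ)⁻¹ • ∑ j ∈ Finset.range J, T j ω x) atTop
      (𝓝 (∫ ω, T 0 ω x ∂P)) :=
  ProbabilityTheory.strong_law_ae (fun j ω => T j ω x) hint
    (fun _ _ hij => (hindep.indepFun hij).comp (measurable_pi_apply x) (measurable_pi_apply x))
    fun j => (hident j).comp (measurable_pi_apply x)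

lemma tendsto_W2sq_map_average_of_hasGradientAt {F : Type*} [NormedAddCommGroup F]
    [InnerProductSpace ℝ F] [FiniteDimensional ℝ F] [MeasurableSpace F] [BorelSpace F]
    {Ω D : Set F} {μ ν : Measure F} [IsFiniteMeasure μ] [ν.IsAddHaarMeasure] (hμν : μ ≪ ν)
    (hμΩ : ∀ᵐ x ∂μ, x ∈ Ω) {T : ℕ → F → F}
    (hT : ∀ j, ∃ φ : F → ℝ, ConvexOn ℝ Ω φ ∧ ∀ x ∈ Ω, HasGradientAt φ (T j x) x)
    {C : ℝ} (hTC : ∀ j, ∀ x ∈ Ω, ‖T j x‖ ≤ C) (hΩC : ∀ x ∈ Ω, ‖x‖ ≤ C)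
    (hDΩ : D ⊆ interior Ω) (hΩD : interior Ω ⊆ closure D)
    (hD : ∀ y ∈ D, Tendsto (fun J : ℕ => (J : ℝ)⁻¹ • ∑ j ∈ Finset.range J, T j y) atTop (𝓝 y)) :
    Tendsto (fun J : ℕ => W2sq (μ.map fun x => (J : ℝ)⁻¹ • ∑ j ∈ Finset.range J, T j x) μ)
      atTop (𝓝 0) := by
  choose φ hφ hφT using hT
  have hμU : ∀ᵐ x ∂μ, x ∈ interior Ω := (hφ 0).1.ae_mem_interior hμν hμΩ
  have hmono (J : ℕ) :
      MonotoneOperatorOn (fun x => (J : ℝ)⁻¹ • ∑ j ∈ Finset.range J, T j x) Ω :=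
    (MonotoneOperatorOn.sum _ fun j _ =>
      (hφ j).monotoneOperatorOn_of_hasGradientAt (hφT j)).const_smul (by positivity)
  have hbdd (J : ℕ) (x : F) (hx : x ∈ Ω) : ‖(J : ℝ)⁻¹ • ∑ j ∈ Finset.range J, T j x‖ ≤ C :=
    norm_average_le ((norm_nonneg x).trans (hΩC x hx)) (fun j => hTC j x hx) J
  refine tendsto_W2sq_map_of_ae_tendsto (B := C + C) (fun J => ?_) (fun J => ?_) ?_
  · exact (Finset.aemeasurable_fun_sum _ fun j _ =>
      aemeasurable_of_hasGradientAt (hφT j) hμΩ).const_smul _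
  · filter_upwards [hμΩ] with x hx
    exact (norm_sub_le _ _).trans (add_le_add (hbdd J x hx) (hΩC x hx))
  · filter_upwards [hμU] with x hx
    exact tendsto_of_monotoneOperatorOn_of_dense isOpen_interior hDΩ hΩD
      (fun J => (hmono J).mono interior_subset) hD hx fun J => hbdd J x (interior_subset hx)

theorem template_barycenter_consistency_general {d : ℕ}
    (Ω : Set (EuclideanSpace ℝ (Fin d)))
    (μ : Measure (EuclideanSpace ℝ (Fin d)))
    (hμ_prob : IsProbabilityMeasure μ) (hμ_ac : μ ≪ volume) (hμΩ : μ Ωᶜ = 0)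
    {Ω' : Type*} [MeasurableSpace Ω'] (P : Measure Ω') (hP : IsProbabilityMeasure P)
    (T : ℕ → Ω' → EuclideanSpace ℝ (Fin d) → EuclideanSpace ℝ (Fin d))
    (h_indep : ProbabilityTheory.iIndepFun T P)
    (h_ident : ∀ i j, ProbabilityTheory.IdentDistrib (T i) (T j) P P)
    (h_bdd : ∃ C : ℝ, ∀ᵐ ω ∂P, ∀ j, ∀ x ∈ Ω, ‖T j ω x‖ ≤ C)
    (h_adm : ∀ᵐ ω ∂P,
      AdmissibleFamily Ω fun o : Option ℕ => o.elim id fun j => T j ω)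
    (h_centered : ∀ j, ∀ x ∈ Ω, (∫ ω, T j ω x ∂P) = x) :
    ∀ᵐ ω ∂P,
      Tendsto
        (fun J : ℕ =>
          W2sq (μ.map fun x => (J : ℝ)⁻¹ • ∑ j ∈ Finset.range J, T j ω x) μ)
        atTop (𝓝 0) := by
  obtain ⟨C, h_bdd⟩ := h_bdd
  obtain ⟨D, hDΩ, hDc, hΩD⟩ :=
    (TopologicalSpace.IsSeparable.of_separableSpace (interior Ω)).exists_countable_dense_subset
  have hslln : ∀ᵐ ω ∂P, ∀ x ∈ D,
      Tendsto (fun J : ℕ => (J : ℝ)⁻¹ • ∑ j ∈ Finset.range J, T j ω x) atTop (𝓝 x) := by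
    refine (ae_ball_iff hDc).2 fun x hx => ?_
    have hxΩ := interior_subset (hDΩ hx)
    have hint : Integrable (fun ω => T 0 ω x) P :=
      .of_bound ((measurable_pi_apply x).comp_aemeasurable
        (h_ident 0 0).aemeasurable_fst).aestronglyMeasurable C
        (by filter_upwards [h_bdd] with ω hω using hω 0 x hxΩ)
    simpa only [h_centered 0 x hxΩ] using
      ae_tendsto_average_apply h_indep (fun j => h_ident j 0) x hint
  filter_upwards [h_bdd, h_adm, hslln] with ω hC hadm hD
  obtain ⟨-, hbij, hgrad⟩ := hadm
  have hT (j : ℕ) : ∃ φ : EuclideanSpace ℝ (Fin d) → ℝ,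
      ConvexOn ℝ Ω φ ∧ ∀ x ∈ Ω, HasGradientAt φ (T j ω x) x := by
    obtain ⟨φ, hφ, -, hφT⟩ := hgrad (some j) none
    exact ⟨φ, hφ, hφT⟩
  have hΩC (x : EuclideanSpace ℝ (Fin d)) (hx : x ∈ Ω) : ‖x‖ ≤ C := by
    obtain ⟨y, hy, rfl⟩ := (hbij (some 0)).surjOn hx
    exact hC 0 y hy
  exact tendsto_W2sq_map_average_of_hasGradientAt hμ_ac (mem_ae_iff.2 hμΩ) hT hC hΩC hDΩ hΩD hD

/-- Template estimation: let `μ` be a compactly supported absolutely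
continuous probability measure on a domain `Ω ⊆ ℝ^d`, and let `T₁, T₂, …` be i.i.d.
uniformly bounded random maps `Ω → Ω` which a.s. form, together with the identity, an
admissible family of deformations, and whose pointwise expectation is the identity on `Ω`.
Then the equal-weight barycenter `μ_B^J = ((1/J) ∑_{j<J} T_j)_# μ` of the warped measures
satisfies `W₂²(μ_B^J, μ) → 0` almost surely as `J → ∞`. -/
theorem template_barycenter_consistency {d : ℕ}
    (Ω : Set (EuclideanSpace ℝ (Fin d)))
    (μ : Measure (EuclideanSpace ℝ (Fin d)))
    (hμ_prob : IsProbabilityMeasure μ) (hμ_ac : μ ≪ volume) (hμΩ : μ Ωᶜ = 0)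
    (hμ_cpt : ∃ K : Set (EuclideanSpace ℝ (Fin d)), IsCompact K ∧ μ Kᶜ = 0)
    {Ω' : Type*} [MeasurableSpace Ω'] (P : Measure Ω') (hP : IsProbabilityMeasure P)
    (T : ℕ → Ω' → EuclideanSpace ℝ (Fin d) → EuclideanSpace ℝ (Fin d))
    (h_meas : ∀ j, Measurable (T j))
    (h_indep : ProbabilityTheory.iIndepFun T P)
    (h_ident : ∀ i j, ProbabilityTheory.IdentDistrib (T i) (T j) P P)
    (h_bdd : ∃ C : ℝ, ∀ᵐ ω ∂P, ∀ j, ∀ x ∈ Ω, ‖T j ω x‖ ≤ C)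
    (h_adm : ∀ᵐ ω ∂P,
      AdmissibleFamily Ω fun o : Option ℕ => o.elim id fun j => T j ω)
    (h_centered : ∀ j, ∀ x ∈ Ω, (∫ ω, T j ω x ∂P) = x) :
    ∀ᵐ ω ∂P,
      Tendsto
        (fun J : ℕ =>
          W2sq (μ.map fun x => (J : ℝ)⁻¹ • ∑ j ∈ Finset.range J, T j ω x) μ)
        atTop (𝓝 0) :=
  template_barycenter_consistency_general Ω μ hμ_prob hμ_ac hμΩ P hP T h_indep h_ident h_bdd h_adm
    h_centered
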